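/- Let W be a group, χ an automorphism of W with χ ∘ χ = id, and M, K normal subgroups of W of finite index. If [M : M ∩ χ(M)] does not divide [W : K], then M ∩ K ≠ χ(M) ∩ χ(K). -/

import Mathlib

theorem Subgroup.relIndex_dvd_index_of_inf_le {W : Type*} [Group W] {H M K : Subgroup W}
    [K.Normal] (hle : M ⊓ K ≤ H) : H.relIndex M ∣ K.index :=
  calc H.relIndex M
      ∣ (M ⊓ K).relIndex M := Subgroup.relIndex_dvd_of_le_left M hle
    _ = K.relIndex M := by rw [inf_comm, Subgroup.inf_relIndex_right]
    _ ∣ K.index := Subgroup.relIndex_dvd_index_of_normal K M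

theorem stmt_6_general {W : Type*} [Group W] (χ : W ≃* W)
    (M K : Subgroup W) [K.Normal]
    (h : ¬ (M.map χ.toMonoidHom).relIndex M ∣ K.index) :
    M ⊓ K ≠ M.map χ.toMonoidHom ⊓ K.map χ.toMonoidHom := fun heq =>
  h (Subgroup.relIndex_dvd_index_of_inf_le (heq ▸ inf_le_left))

/-- Chirality criterion: if `[M : M ∩ χ(M)]` does not divide `[W : K]`, then
`M ∩ K ≠ χ(M) ∩ χ(K)`, i.e. the mix is chiral. -/
theorem stmt_6 {W : Type*} [Group W] (χ : W ≃* W) (hχ : ∀ w, χ (χ w) = w)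
    (M K : Subgroup W) [M.Normal] [K.Normal] [M.FiniteIndex] [K.FiniteIndex]
    (h : ¬ (M.map χ.toMonoidHom).relIndex M ∣ K.index) :
    M ⊓ K ≠ M.map χ.toMonoidHom ⊓ K.map χ.toMonoidHom :=
  stmt_6_general χ M K h
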